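/- Fix a unit quaternion h and define, for x in the unit quaternions S³, p(x) = −h i x i x⁻¹ h⁻¹, α₂(x) = −2 h x j x⁻¹ h⁻¹ and α₃(x) = −2 h x k x⁻¹ h⁻¹. Then p(x) is a unit quaternion for every x, and the directional derivatives of p at x in the directions xi, xj, xk are respectively: X₁(p) = 0, X₂(p) = p(x) · α₂(x), X₃(p) = p(x) · α₃(x). In particular p has nowhere maximal rank and p(S³) is contained in a totally geodesic 2-sphere of S³. -/

import Mathlib

/-!
Both `p` and the fields `αₗ` are built from `y ↦ y a y⁻¹`, whose derivative along the
left-invariant direction `y e` is `y (e a - a e) y⁻¹`. With `a = i` this vanishes for `e = i`,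
while `j` and `k` anticommute with `i`, turning the commutator into `-2 i e`; regrouping
`h i x (i e) x⁻¹ h⁻¹ = p(x) · (h x e x⁻¹ h⁻¹)` gives `X₂(p)` and `X₃(p)`.
For the image, `p(y) = c · u` with `c = h i h⁻¹` and `u = -(h y) i (h y)⁻¹` purely imaginary, and
`Re (c u c̄) = |c|² Re u = 0`, so `p(S³)` lies in the great 2-sphere orthogonal to `c`.
-/

noncomputable section

open Quaternion

/-- The imaginary quaternion unit `i`. -/
def qi : ℍ[ℝ] := ⟨0, 1, 0, 0⟩

/-- The imaginary quaternion unit `j`. -/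
def qj : ℍ[ℝ] := ⟨0, 0, 1, 0⟩

/-- The imaginary quaternion unit `k`. -/
def qk : ℍ[ℝ] := ⟨0, 0, 0, 1⟩

/-- Euclidean inner product on the quaternions: `⟨x,y⟩ = Re (x * star y)`. -/
def ipQ (x y : ℍ[ℝ]) : ℝ := (x * star y).re

/-- Cross product of (imaginary) quaternions: `α × β = ½(αβ − βα)`. -/
def crossQ (a b : ℍ[ℝ]) : ℍ[ℝ] := (1 / 2 : ℝ) • (a * b - b * a)

section DivisionAlgebra

variable {𝕜 R : Type*} [NontriviallyNormedField 𝕜] [NormedDivisionRing R] [NormedAlgebra 𝕜 R]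

theorem fderiv_mul_mul_inv_mul_apply_mul (b a c : R) {x : R} (hx : x ≠ 0) (e : R) :
    fderiv 𝕜 (fun y => b * y * a * y⁻¹ * c) x (x * e) = b * x * (e * a - a * e) * x⁻¹ * c := by
  have hlin : HasFDerivAt (fun y => b * y * a) (ContinuousLinearMap.mulLeftRight 𝕜 R b a) x :=
    (ContinuousLinearMap.mulLeftRight 𝕜 R b a).hasFDerivAt
  have hf : HasFDerivAt (fun y => b * y * a * y⁻¹ * c) _ x :=
    (hlin.mul' (hasFDerivAt_inv' hx)).mul_const' c
  rw [hf.fderiv]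
  simp [mul_assoc, mul_sub, sub_mul, inv_mul_cancel_left₀ hx, neg_add_eq_sub]

theorem fderiv_mul_mul_inv_mul_apply_mul_of_anticomm (b a c : R) {x e : R} (hx : x ≠ 0)
    (hc : c ≠ 0) (hea : e * a = -(a * e)) :
    fderiv 𝕜 (fun y => b * y * a * y⁻¹ * c) x (x * e)
      = b * x * a * x⁻¹ * c * -((2 : 𝕜) • (c⁻¹ * x * e * x⁻¹ * c)) := by
  rw [fderiv_mul_mul_inv_mul_apply_mul b a c hx, hea, two_smul]
  simp [mul_assoc, mul_add, add_mul, sub_eq_add_neg, mul_inv_cancel_left₀ hc,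
    inv_mul_cancel_left₀ hx]

end DivisionAlgebra

namespace Quaternion

variable {R : Type*}

theorem re_mul_comm [CommRing R] (a b : ℍ[R]) : (a * b).re = (b * a).re := by
  simp only [re_mul]; ring

theorem re_mul_mul_inv [Field R] [LinearOrder R] [IsStrictOrderedRing R] (a : ℍ[R]) {g : ℍ[R]}
    (hg : g ≠ 0) : (g * a * g⁻¹).re = a.re := by
  rw [mul_assoc, re_mul_comm, mul_assoc, inv_mul_cancel₀ hg, mul_one]

theorem re_mul_mul_star [CommRing R] (c u : ℍ[R]) : (c * u * star c).re = normSq c * u.re := by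
  rw [re_mul_comm, ← mul_assoc, star_mul_self, coe_mul_eq_smul, re_smul, smul_eq_mul]

end Quaternion

theorem ipQ_mul_self_eq_zero_of_re_eq_zero (c : ℍ[ℝ]) {u : ℍ[ℝ]} (hu : u.re = 0) :
    ipQ (c * u) c = 0 := by
  rw [ipQ, re_mul_mul_star, hu, mul_zero]

theorem re_qi : qi.re = 0 := rfl

theorem norm_qi : ‖qi‖ = 1 := by
  rw [← sq_eq_sq₀ (norm_nonneg _) zero_le_one, sq, ← normSq_eq_norm_mul_self, normSq_def']
  simp [qi]

theorem qi_ne_zero : qi ≠ 0 := norm_ne_zero_iff.mp (norm_qi ▸ one_ne_zero)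

theorem qj_mul_qi : qj * qi = -(qi * qj) := by
  ext <;> simp only [re_mul, imI_mul, imJ_mul, imK_mul, re_neg, imI_neg, imJ_neg, imK_neg] <;>
    norm_num [qi, qj]

theorem qk_mul_qi : qk * qi = -(qi * qk) := by
  ext <;> simp only [re_mul, imI_mul, imJ_mul, imK_mul, re_neg, imI_neg, imJ_neg, imK_neg] <;>
    norm_num [qi, qk]

/-- the map `p(x) = −hixix⁻¹h⁻¹` takes values in `S³`, satisfies
`X₁(p) = 0`, `X₂(p) = pα₂`, `X₃(p) = pα₃` (so `p` has nowhere maximal rank), and its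
image `p(S³)` is contained in a totally geodesic 2-sphere of `S³` (a great 2-sphere
`{z ∈ S³ : ⟨z, a⟩ = 0}`). -/
theorem stmt16 (h : ℍ[ℝ]) (hh : ‖h‖ = 1)
    (p α₂ α₃ : ℍ[ℝ] → ℍ[ℝ])
    (hp : p = fun x => -(h * qi * x * qi * x⁻¹ * h⁻¹))
    (hα₂ : α₂ = fun x => -((2 : ℝ) • (h * x * qj * x⁻¹ * h⁻¹)))
    (hα₃ : α₃ = fun x => -((2 : ℝ) • (h * x * qk * x⁻¹ * h⁻¹)))
    (x : ℍ[ℝ]) (hx : ‖x‖ = 1) :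
    ‖p x‖ = 1 ∧
    fderiv ℝ p x (x * qi) = 0 ∧
    fderiv ℝ p x (x * qj) = p x * α₂ x ∧
    fderiv ℝ p x (x * qk) = p x * α₃ x ∧
    ∃ a : ℍ[ℝ], a ≠ 0 ∧ ∀ y : ℍ[ℝ], ‖y‖ = 1 → ipQ (p y) a = 0 := by
  have hh0 : h ≠ 0 := norm_ne_zero_iff.mp (hh ▸ one_ne_zero)
  have hx0 : x ≠ 0 := norm_ne_zero_iff.mp (hx ▸ one_ne_zero)
  have hp' : p = fun y => -(h * qi) * y * qi * y⁻¹ * h⁻¹ := by simp only [hp, neg_mul]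
  refine ⟨?_, ?_, ?_, ?_, ?_⟩
  · simp [hp, hh, hx, norm_qi]
  · rw [hp', fderiv_mul_mul_inv_mul_apply_mul _ _ _ hx0, sub_self]
    simp
  · simpa only [hp', hα₂, inv_inv] using
      fderiv_mul_mul_inv_mul_apply_mul_of_anticomm _ _ _ hx0 (inv_ne_zero hh0) qj_mul_qi
  · simpa only [hp', hα₃, inv_inv] using
      fderiv_mul_mul_inv_mul_apply_mul_of_anticomm _ _ _ hx0 (inv_ne_zero hh0) qk_mul_qi
  · refine ⟨h * qi * h⁻¹, by simp [hh0, qi_ne_zero], fun y hy => ?_⟩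
    have hy0 : y ≠ 0 := norm_ne_zero_iff.mp (hy ▸ one_ne_zero)
    have hpy : p y = h * qi * h⁻¹ * -(h * y * qi * (h * y)⁻¹) := by
      simp [hp, mul_inv_rev, mul_assoc, inv_mul_cancel_left₀ hh0]
    refine hpy ▸ ipQ_mul_self_eq_zero_of_re_eq_zero _ ?_
    rw [re_neg, re_mul_mul_inv _ (mul_ne_zero hh0 hy0), re_qi, neg_zero]
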